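/- arXiv:1004.0039 — 2 statements merged into one kernel-verified Lean document; each statement's English description precedes it below -/
import Mathlib

section
/- Let n ≥ 2 and 1 ≤ ℓ ≤ n/2. Then the collection of subsets 𝒞_{n−1}^ℓ = { L_{I,J} : I, J ⊆ {1,…,n}, |I| = |J| = ℓ, I ≠ J } of ℝ^n is equal to the collection { L_{I,J} : I, J ⊆ {1,…,n}, 1 ≤ |I| = |J| ≤ ℓ, I ∩ J = ∅ }. -/
/-- The hyperplane `L_{I,J} = {x ∈ ℝⁿ : |J|·Σ_{i∈I} x_i = |I|·Σ_{j∈J} x_j}`. -/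
def hyperplaneL (n : ℕ) (I J : Finset (Fin n)) : Set (Fin n → ℝ) :=
  {x | (J.card : ℝ) * ∑ i ∈ I, x i = (I.card : ℝ) * ∑ j ∈ J, x j}

lemma hyp_simple (n : ℕ) (I J : Finset (Fin n)) (h : I.card = J.card) (h1 : 1 ≤ I.card) :
    hyperplaneL n I J = {x | ∑ i ∈ I, x i = ∑ j ∈ J, x j} := by
  have hc : (I.card : ℝ) ≠ 0 := by positivity
  ext x
  simp only [hyperplaneL, Set.mem_setOf_eq, ← h]
  exact ⟨fun hx => mul_left_cancel₀ hc hx, fun hx => by rw [hx]⟩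

/-- For `n ≥ 2` and `1 ≤ ℓ ≤ n/2`, the center of mass arrangement
`𝒞_{n−1}^ℓ = {L_{I,J} : |I| = |J| = ℓ, I ≠ J}` is equal, as a collection of subsets of `ℝⁿ`,
to `{L_{I,J} : 1 ≤ |I| = |J| ≤ ℓ, I ∩ J = ∅}`. -/
theorem centerOfMassArrangement_eq (n ℓ : ℕ) (hn : 2 ≤ n) (h1 : 1 ≤ ℓ) (h2 : 2 * ℓ ≤ n) :
    {S : Set (Fin n → ℝ) | ∃ I J : Finset (Fin n),
        I.card = ℓ ∧ J.card = ℓ ∧ I ≠ J ∧ S = hyperplaneL n I J} =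
    {S : Set (Fin n → ℝ) | ∃ I J : Finset (Fin n),
        I.card = J.card ∧ 1 ≤ I.card ∧ I.card ≤ ℓ ∧ I ∩ J = ∅ ∧ S = hyperplaneL n I J} := by
  ext S
  simp only [Set.mem_setOf_eq]
  constructor
  · rintro ⟨I, J, hI, hJ, hne, rfl⟩
    refine ⟨I \ J, J \ I, ?_, ?_, ?_, ?_, ?_⟩
    · have a := Finset.card_sdiff_add_card_inter I J
      have b := Finset.card_sdiff_add_card_inter J I
      rw [Finset.inter_comm] at b
      omega
    · by_contra hc
      push_neg at hc
      interval_cases hh : (I \ J).card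
      have : I ⊆ J := by
        rwa [← Finset.sdiff_eq_empty_iff_subset, ← Finset.card_eq_zero]
      exact hne (Finset.eq_of_subset_of_card_le this (by omega))
    · have := Finset.card_sdiff_add_card_inter I J
      omega
    · exact Finset.disjoint_iff_inter_eq_empty.mp disjoint_sdiff_sdiff
    · have hcard : (I \ J).card = (J \ I).card := by
        have a := Finset.card_sdiff_add_card_inter I J
        have b := Finset.card_sdiff_add_card_inter J I
        rw [Finset.inter_comm] at b
        omega
      have hpos : 1 ≤ (I \ J).card := by
        by_contra hc
        push_neg at hc
        interval_cases hh : (I \ J).card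
        have : I ⊆ J := by
          rwa [← Finset.sdiff_eq_empty_iff_subset, ← Finset.card_eq_zero]
        exact hne (Finset.eq_of_subset_of_card_le this (by omega))
      rw [hyp_simple n I J (hI.trans hJ.symm) (by omega),
          hyp_simple n (I \ J) (J \ I) hcard hpos]
      ext x
      simp only [Set.mem_setOf_eq]
      have eI : ∑ i ∈ I ∩ J, x i + ∑ i ∈ I \ J, x i = ∑ i ∈ I, x i :=
        Finset.sum_inter_add_sum_sdiff I J x
      have eJ : ∑ i ∈ J ∩ I, x i + ∑ i ∈ J \ I, x i = ∑ i ∈ J, x i :=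
        Finset.sum_inter_add_sum_sdiff J I x
      rw [Finset.inter_comm] at eJ
      rw [← eI, ← eJ]
      constructor <;> intro h <;> linarith
  · rintro ⟨I, J, hIJ, hI1, hIl, hdisj, rfl⟩
    have hdisj' : Disjoint I J := Finset.disjoint_iff_inter_eq_empty.mpr hdisj
    have hcompl : ℓ - I.card ≤ (I ∪ J)ᶜ.card := by
      have := Finset.card_union_of_disjoint hdisj'
      have hcc : (I ∪ J)ᶜ.card = n - (I ∪ J).card := by
        rw [Finset.card_compl]; simp
      omega
    obtain ⟨K, hKsub, hKcard⟩ := Finset.exists_subset_card_eq hcompl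
    have hKI : Disjoint K I := by
      refine Finset.disjoint_left.mpr fun a ha hai => ?_
      have := hKsub ha
      simp [Finset.mem_compl] at this
      exact this.1 hai
    have hKJ : Disjoint K J := by
      refine Finset.disjoint_left.mpr fun a ha haj => ?_
      have := hKsub ha
      simp [Finset.mem_compl] at this
      exact this.2 haj
    refine ⟨I ∪ K, J ∪ K, ?_, ?_, ?_, ?_⟩
    · rw [Finset.card_union_of_disjoint hKI.symm]; omega
    · rw [Finset.card_union_of_disjoint hKJ.symm]; omega
    · intro h
      obtain ⟨a, ha⟩ := Finset.card_pos.mp hI1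
      have : a ∈ J ∪ K := h ▸ Finset.mem_union_left K ha
      rcases Finset.mem_union.mp this with h' | h'
      · exact Finset.disjoint_left.mp hdisj' ha h'
      · exact Finset.disjoint_left.mp hKI.symm ha h'
    · have hcu : (I ∪ K).card = (J ∪ K).card := by
        rw [Finset.card_union_of_disjoint hKI.symm, Finset.card_union_of_disjoint hKJ.symm, hIJ]
      have hcu1 : 1 ≤ (I ∪ K).card := by
        rw [Finset.card_union_of_disjoint hKI.symm]; omega
      rw [hyp_simple n I J hIJ hI1, hyp_simple n (I ∪ K) (J ∪ K) hcu hcu1]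
      ext x
      simp only [Set.mem_setOf_eq]
      rw [Finset.sum_union hKI.symm, Finset.sum_union hKJ.symm]
      constructor <;> intro h <;> linarith
end

section
/- Let n ≥ 4 and 2 ≤ ℓ ≤ n/2. Then M_ℓ(ℂ,n) ⊆ M_{ℓ−1}(ℂ,n); in particular M_ℓ(ℂ,n) ⊆ M_1(ℂ,n) = F(ℂ,n). -/
/-- The complexified hyperplane
`L_{I,J} ⊗ ℂ = {z ∈ ℂⁿ : |J|·Σ_{i∈I} z_i = |I|·Σ_{j∈J} z_j}`. -/
def hyperplaneLC (n : ℕ) (I J : Finset (Fin n)) : Set (Fin n → ℂ) :=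
  {z | (J.card : ℂ) * ∑ i ∈ I, z i = (I.card : ℂ) * ∑ j ∈ J, z j}

/-- The center of mass configuration space
`M_ℓ(ℂ,n) = ℂⁿ ∖ ⋃ {L_{I,J}⊗ℂ : |I| = |J| = ℓ, I ≠ J}`. -/
def centerOfMassConf (n ℓ : ℕ) : Set (Fin n → ℂ) :=
  {z | ∀ I J : Finset (Fin n), I.card = ℓ → J.card = ℓ → I ≠ J → z ∉ hyperplaneLC n I J}

/-- The configuration space `F(ℂ,n)` of `n` distinct points in `ℂ`. -/
def configSpace (n : ℕ) : Set (Fin n → ℂ) :=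
  {z | ∀ i j : Fin n, i ≠ j → z i ≠ z j}

lemma centerOfMassConf_step (n m : ℕ) (hm : 2 ≤ m) (h : 2 * m ≤ n) :
    centerOfMassConf n m ⊆ centerOfMassConf n (m - 1) := by
  intro z hz I J hI hJ hIJ hmem
  -- from the hyperplane membership, get equal sums
  have hm1 : (1 : ℕ) ≤ m - 1 := by omega
  have hne : ((m - 1 : ℕ) : ℂ) ≠ 0 := by
    have : m - 1 ≠ 0 := by omega
    exact Nat.cast_ne_zero.mpr this
  have hsum : ∑ i ∈ I, z i = ∑ j ∈ J, z j := by
    have := hmem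
    simp only [hyperplaneLC, Set.mem_setOf_eq, hI, hJ] at this
    exact mul_left_cancel₀ hne this
  -- find k outside I ∪ J
  have hcard : (I ∪ J).card < n := by
    have h1 : (I ∪ J).card ≤ I.card + J.card := Finset.card_union_le I J
    omega
  obtain ⟨k, hk⟩ : ∃ k : Fin n, k ∉ I ∪ J := by
    by_contra hcon
    push_neg at hcon
    have : (Finset.univ : Finset (Fin n)) ⊆ I ∪ J := fun x _ => hcon x
    have := Finset.card_le_card this
    simp at this
    omega
  simp only [Finset.mem_union, not_or] at hk
  have hI' : (insert k I).card = m := by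
    rw [Finset.card_insert_of_notMem hk.1, hI]; omega
  have hJ' : (insert k J).card = m := by
    rw [Finset.card_insert_of_notMem hk.2, hJ]; omega
  have hne' : insert k I ≠ insert k J := by
    intro hq
    apply hIJ
    ext x
    constructor
    · intro hx
      have : x ∈ insert k J := hq ▸ Finset.mem_insert_of_mem hx
      rcases Finset.mem_insert.mp this with rfl | h
      · exact absurd hx hk.1
      · exact h
    · intro hx
      have : x ∈ insert k I := hq ▸ Finset.mem_insert_of_mem hx
      rcases Finset.mem_insert.mp this with rfl | h
      · exact absurd hx hk.2
      · exact h
  apply hz (insert k I) (insert k J) hI' hJ' hne'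
  simp only [hyperplaneLC, Set.mem_setOf_eq, hI', hJ',
    Finset.sum_insert hk.1, Finset.sum_insert hk.2, hsum]

lemma centerOfMassConf_to_one (n m : ℕ) (hm : 1 ≤ m) (h : 2 * m ≤ n) :
    centerOfMassConf n m ⊆ centerOfMassConf n 1 := by
  induction m with
  | zero => omega
  | succ k ih =>
    rcases Nat.eq_or_lt_of_le hm with h1 | h1
    · simp [← h1]
    · have hk : 1 ≤ k := by omega
      have := centerOfMassConf_step n (k + 1) (by omega) h
      have h2 : k + 1 - 1 = k := rfl
      rw [h2] at this
      exact this.trans (ih hk (by omega))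

/-- For `n ≥ 4` and `2 ≤ ℓ ≤ n/2` one has `M_ℓ(ℂ,n) ⊆ M_{ℓ−1}(ℂ,n)`;
in particular `M_ℓ(ℂ,n) ⊆ M_1(ℂ,n) = F(ℂ,n)`. -/
theorem centerOfMassConf_subset (n ℓ : ℕ) (hn : 4 ≤ n) (h1 : 2 ≤ ℓ) (h2 : 2 * ℓ ≤ n) :
    centerOfMassConf n ℓ ⊆ centerOfMassConf n (ℓ - 1) ∧
    centerOfMassConf n ℓ ⊆ centerOfMassConf n 1 ∧
    centerOfMassConf n 1 = configSpace n := by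
  refine ⟨centerOfMassConf_step n ℓ h1 h2,
    centerOfMassConf_to_one n ℓ (by omega) h2, ?_⟩
  ext z
  constructor
  · intro hz i j hij
    have := hz {i} {j} (Finset.card_singleton i) (Finset.card_singleton j)
      (by simpa [Finset.singleton_injective.eq_iff] using hij)
    simp only [hyperplaneLC, Set.mem_setOf_eq, Finset.card_singleton,
      Finset.sum_singleton, Nat.cast_one, one_mul] at this
    exact this
  · intro hz I J hI hJ hIJ hmem
    obtain ⟨i, rfl⟩ := Finset.card_eq_one.mp hI
    obtain ⟨j, rfl⟩ := Finset.card_eq_one.mp hJ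
    have hij : i ≠ j := fun h => hIJ (by rw [h])
    simp only [hyperplaneLC, Set.mem_setOf_eq, Finset.card_singleton,
      Finset.sum_singleton, Nat.cast_one, one_mul] at hmem
    exact hz i j hij hmem
end
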